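/- arXiv:1208.4567 — 2 statements merged into one kernel-verified Lean document; each statement's English description precedes it below -/
import Mathlib

section
/- The derivative of the complete elliptic integral of the first kind satisfies dK/dk = E(k)/(k(1-k²)) - K(k)/k for 0 < k < 1. -/
/-!
Write `Δ = 1 - k² sin² t`. Differentiating under the integral sign (the parameter derivative is
bounded uniformly for `|k| ≤ r < 1`) gives `K'(k) = ∫ k sin² t · Δ^(-3/2)`. Since `k² sin² t = 1 - Δ`,
this is `(∫ Δ^(-3/2) - K) / k`, and `∫₀^{π/2} Δ^(-3/2) = E / (1 - k²)` because
`d/dt (k² sin t cos t / √Δ) = √Δ - (1 - k²) Δ^(-3/2)`, whose boundary terms vanish at `0` and `π/2`.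
-/

open Real Filter

/-- Complete elliptic integral of the first kind, `K(k) = ∫₀^{π/2} dt/√(1-k² sin² t)`. -/
noncomputable def ellipticK (k : ℝ) : ℝ :=
  ∫ t in (0:ℝ)..(π/2), 1 / Real.sqrt (1 - k^2 * Real.sin t ^ 2)

/-- Complete elliptic integral of the second kind, `E(k) = ∫₀^{π/2} √(1-k² sin² t) dt`. -/
noncomputable def ellipticE (k : ℝ) : ℝ :=
  ∫ t in (0:ℝ)..(π/2), Real.sqrt (1 - k^2 * Real.sin t ^ 2)

open Set MeasureTheory intervalIntegral

lemma one_sub_le_one_sub_sq_mul_sin_sq {x c : ℝ} (hx : x ^ 2 ≤ c) (t : ℝ) :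
    1 - c ≤ 1 - x ^ 2 * sin t ^ 2 := by
  nlinarith [sin_sq_le_one t, sq_nonneg x]

lemma one_sub_sq_mul_sin_sq_pos {x : ℝ} (hx : x ^ 2 < 1) (t : ℝ) :
    0 < 1 - x ^ 2 * sin t ^ 2 := by
  linarith [one_sub_le_one_sub_sq_mul_sin_sq (le_refl (x ^ 2)) t]

lemma continuous_one_div_sqrt_one_sub_sq_mul_sin_sq {x : ℝ} (hx : x ^ 2 < 1) :
    Continuous fun t => 1 / √(1 - x ^ 2 * sin t ^ 2) :=
  continuous_const.div (by fun_prop) fun t => (sqrt_pos.2 (one_sub_sq_mul_sin_sq_pos hx t)).ne'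

lemma continuous_inv_sqrt_mul_one_sub_sq_mul_sin_sq {x : ℝ} (hx : x ^ 2 < 1) :
    Continuous fun t => (√(1 - x ^ 2 * sin t ^ 2) * (1 - x ^ 2 * sin t ^ 2))⁻¹ :=
  (by fun_prop : Continuous _).inv₀ fun t =>
    (mul_pos (sqrt_pos.2 (one_sub_sq_mul_sin_sq_pos hx t)) (one_sub_sq_mul_sin_sq_pos hx t)).ne'

lemma hasDerivAt_one_div_sqrt_one_sub_sq_mul {x c : ℝ} (hx : 0 < 1 - x ^ 2 * c) :
    HasDerivAt (fun y => 1 / √(1 - y ^ 2 * c))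
      (x * c / (√(1 - x ^ 2 * c) * (1 - x ^ 2 * c))) x := by
  have hΔ := ((hasDerivAt_pow 2 x).mul_const c).const_sub 1
  refine ((hasDerivAt_const x (1 : ℝ)).div (hΔ.sqrt hx.ne') (sqrt_pos.2 hx).ne').congr_deriv ?_
  rw [sq_sqrt hx.le]
  field_simp
  ring

lemma abs_mul_sin_sq_div_le {x r : ℝ} (hx : |x| ≤ r) (hr : r < 1) (t : ℝ) :
    |x * sin t ^ 2 / (√(1 - x ^ 2 * sin t ^ 2) * (1 - x ^ 2 * sin t ^ 2))|
      ≤ r / (√(1 - r ^ 2) * (1 - r ^ 2)) := by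
  have hr2 : 0 < 1 - r ^ 2 := by nlinarith [abs_nonneg x]
  have hΔ := one_sub_le_one_sub_sq_mul_sin_sq (sq_le_sq' (abs_le.1 hx).1 (abs_le.1 hx).2) t
  have hnum : |x * sin t ^ 2| ≤ r := by
    rw [abs_mul, abs_of_nonneg (sq_nonneg (sin t))]
    nlinarith [sin_sq_le_one t, sq_nonneg (sin t), abs_nonneg x]
  have hpos : 0 < 1 - x ^ 2 * sin t ^ 2 := hr2.trans_le hΔ
  rw [abs_div, abs_of_pos (mul_pos (sqrt_pos.2 hpos) hpos)]
  exact div_le_div₀ ((abs_nonneg _).trans hnum) hnum (by positivity)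
    (mul_le_mul (sqrt_le_sqrt hΔ) hΔ hr2.le (sqrt_nonneg _))

lemma hasDerivAt_ellipticK {k : ℝ} (hk : |k| < 1) :
    HasDerivAt ellipticK
      (∫ t in 0..π / 2,
        k * sin t ^ 2 / (√(1 - k ^ 2 * sin t ^ 2) * (1 - k ^ 2 * sin t ^ 2))) k := by
  obtain ⟨r, hkr, hr⟩ := exists_between hk
  have hs : Icc (-r) r ∈ nhds k :=
    Icc_mem_nhds (by linarith [neg_abs_le k]) (by linarith [le_abs_self k])
  have hk2 : k ^ 2 < 1 := by nlinarith [sq_abs k, abs_nonneg k]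
  refine (hasDerivAt_integral_of_dominated_loc_of_deriv_le hs
    (Eventually.of_forall fun x => (by fun_prop : Measurable _).aestronglyMeasurable)
    ((continuous_one_div_sqrt_one_sub_sq_mul_sin_sq hk2).intervalIntegrable _ _)
    (by fun_prop : Measurable _).aestronglyMeasurable
    (Eventually.of_forall fun t _ x hx => abs_mul_sin_sq_div_le (abs_le.2 hx) hr t)
    intervalIntegrable_const
    (Eventually.of_forall fun t _ x hx => hasDerivAt_one_div_sqrt_one_sub_sq_mul
      (one_sub_sq_mul_sin_sq_pos ?_ t))).2
  nlinarith [abs_le.2 hx, sq_abs x, abs_nonneg x]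

lemma hasDerivAt_sq_mul_sin_mul_cos_div_sqrt {k t : ℝ} (ht : 0 < 1 - k ^ 2 * sin t ^ 2) :
    HasDerivAt (fun s => k ^ 2 * (sin s * cos s / √(1 - k ^ 2 * sin s ^ 2)))
      (√(1 - k ^ 2 * sin t ^ 2)
        - (1 - k ^ 2) * (√(1 - k ^ 2 * sin t ^ 2) * (1 - k ^ 2 * sin t ^ 2))⁻¹) t := by
  have hΔ := (((hasDerivAt_sin t).fun_pow 2).const_mul (k ^ 2)).const_sub 1
  refine ((((hasDerivAt_sin t).fun_mul (hasDerivAt_cos t)).div (hΔ.sqrt ht.ne')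
    (sqrt_pos.2 ht).ne').const_mul (k ^ 2)).congr_deriv ?_
  have hcos : cos t ^ 2 = 1 - sin t ^ 2 := cos_sq' t
  field_simp
  rw [sq_sqrt ht.le, hcos]
  ring

lemma integral_inv_sqrt_mul_one_sub_sq_mul_sin_sq {k : ℝ} (hk : k ^ 2 < 1) :
    ∫ t in 0..π / 2, (√(1 - k ^ 2 * sin t ^ 2) * (1 - k ^ 2 * sin t ^ 2))⁻¹
      = ellipticE k / (1 - k ^ 2) := by
  have hcont := continuous_inv_sqrt_mul_one_sub_sq_mul_sin_sq hk
  have hsqrt : Continuous fun t => √(1 - k ^ 2 * sin t ^ 2) := by fun_prop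
  have hftc := integral_eq_sub_of_hasDerivAt
    (fun t _ => hasDerivAt_sq_mul_sin_mul_cos_div_sqrt (one_sub_sq_mul_sin_sq_pos hk t))
    ((hsqrt.sub (continuous_const.mul hcont)).intervalIntegrable 0 (π / 2))
  rw [integral_sub (hsqrt.intervalIntegrable _ _) ((hcont.intervalIntegrable _ _).const_mul _),
    intervalIntegral.integral_const_mul] at hftc
  simp only [sin_zero, cos_pi_div_two, zero_mul, mul_zero, zero_div, sub_zero] at hftc
  rw [eq_div_iff (by linarith), ellipticE]
  linarith

theorem dK_dk (k : ℝ) (hk : 0 < k) (hk1 : k < 1) :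
    HasDerivAt ellipticK
      (ellipticE k / (k * (1 - k^2)) - ellipticK k / k) k := by
  have hk2 : k ^ 2 < 1 := by nlinarith
  have hΔ := one_sub_sq_mul_sin_sq_pos hk2
  have hsplit : ∀ t, k * sin t ^ 2 / (√(1 - k ^ 2 * sin t ^ 2) * (1 - k ^ 2 * sin t ^ 2))
      = ((√(1 - k ^ 2 * sin t ^ 2) * (1 - k ^ 2 * sin t ^ 2))⁻¹
        - 1 / √(1 - k ^ 2 * sin t ^ 2)) / k := fun t => by
    have hΔt := hΔ t
    have := sqrt_pos.2 hΔt
    field_simp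
    ring
  convert hasDerivAt_ellipticK (abs_lt.2 ⟨by linarith, hk1⟩) using 1
  rw [integral_congr fun t _ => hsplit t, intervalIntegral.integral_div,
    integral_sub ((continuous_inv_sqrt_mul_one_sub_sq_mul_sin_sq hk2).intervalIntegrable _ _)
      ((continuous_one_div_sqrt_one_sub_sq_mul_sin_sq hk2).intervalIntegrable _ _),
    integral_inv_sqrt_mul_one_sub_sq_mul_sin_sq hk2, ← ellipticK]
  field_simp
end

section
/- The singular modulus for r = 2 is k₂ = √2 − 1, i.e., the unique k ∈ (0,1) with K(√(1−k²))/K(k) = √2 is k = √2 − 1. -/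
open Real Filter

/-!
Gauss's substitution `sin φ = (b sin² θ - a cos² θ) / (a cos² θ + b sin² θ)` maps `[0, π/2]`
onto `[-π/2, π/2]` and shows that `I(a, b) = ∫₀^{π/2} dt / √(a² cos² t + b² sin² t)` is invariant
under the arithmetic-geometric mean step `(a, b) ↦ ((a + b) / 2, √(ab))`. With
`k' = √(1 - k²)` we have `K(k) = I(1, k')` and `K(k') = I(1, k)`; for `k = √2 - 1` also
`1 + k = √2` and `k'² = 2k`, so one AGM step followed by homogeneity of `I` gives
`I(1, k) = √2 · I(1, k')`, i.e. `K(k') / K(k) = √2`. Uniqueness holds because `K(k') / K(k)`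
is strictly decreasing on `(0, 1)`.
-/

open intervalIntegral Set

lemma mul_cos_sq_add_mul_sin_sq_pos {p q : ℝ} (hp : 0 < p) (hq : 0 < q) (t : ℝ) :
    0 < p * cos t ^ 2 + q * sin t ^ 2 := by
  nlinarith [mul_nonneg (sub_nonneg.2 (min_le_left p q)) (sq_nonneg (cos t)),
    mul_nonneg (sub_nonneg.2 (min_le_right p q)) (sq_nonneg (sin t)), lt_min hp hq,
    sin_sq_add_cos_sq t]

lemma integral_neg_self_of_even {f : ℝ → ℝ} (hf : Continuous f) (heven : ∀ x, f (-x) = f x)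
    (c : ℝ) : ∫ x in -c..c, f x = 2 * ∫ x in (0:ℝ)..c, f x := by
  have hneg : ∫ x in -c..0, f x = ∫ x in (0:ℝ)..c, f x := by
    simpa only [heven, neg_zero] using (integral_comp_neg (a := 0) (b := c) f).symm
  rw [← integral_add_adjacent_intervals (hf.intervalIntegrable _ 0) (hf.intervalIntegrable 0 _),
    hneg, two_mul]

noncomputable def agmIntegrand (a b t : ℝ) : ℝ :=
  1 / √(a ^ 2 * cos t ^ 2 + b ^ 2 * sin t ^ 2)

noncomputable def agmIntegral (a b : ℝ) : ℝ :=
  ∫ t in (0:ℝ)..(π / 2), agmIntegrand a b t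

section agmIntegrand

variable {a b : ℝ}

lemma agmIntegrand_pos (ha : a ≠ 0) (hb : b ≠ 0) (t : ℝ) : 0 < agmIntegrand a b t :=
  one_div_pos.2 <| sqrt_pos.2 <| mul_cos_sq_add_mul_sin_sq_pos (by positivity) (by positivity) t

lemma continuous_agmIntegrand (ha : a ≠ 0) (hb : b ≠ 0) : Continuous (agmIntegrand a b) :=
  continuous_const.div (by fun_prop) fun t => (sqrt_pos.2 <|
    mul_cos_sq_add_mul_sin_sq_pos (by positivity) (by positivity) t).ne'

lemma agmIntegrand_neg (t : ℝ) : agmIntegrand a b (-t) = agmIntegrand a b t := by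
  simp only [agmIntegrand, cos_neg, sin_neg, neg_sq]

end agmIntegrand

noncomputable def gaussRatio (a b θ : ℝ) : ℝ :=
  (b * sin θ ^ 2 - a * cos θ ^ 2) / (a * cos θ ^ 2 + b * sin θ ^ 2)

section gaussRatio

variable {a b : ℝ}

lemma gaussRatio_mem_Icc (ha : 0 < a) (hb : 0 < b) (θ : ℝ) : gaussRatio a b θ ∈ Icc (-1) 1 := by
  have hD := mul_cos_sq_add_mul_sin_sq_pos ha hb θ
  rw [gaussRatio, mem_Icc, le_div_iff₀ hD, div_le_one hD]
  constructor <;>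
    nlinarith [mul_nonneg ha.le (sq_nonneg (cos θ)), mul_nonneg hb.le (sq_nonneg (sin θ))]

lemma gaussRatio_mem_Ioo (ha : 0 < a) (hb : 0 < b) {θ : ℝ} (hθ : θ ∈ Ioo 0 (π / 2)) :
    gaussRatio a b θ ∈ Ioo (-1) 1 := by
  have hD := mul_cos_sq_add_mul_sin_sq_pos ha hb θ
  have hsin : 0 < sin θ := sin_pos_of_pos_of_lt_pi hθ.1 (by linarith [hθ.2, pi_pos])
  have hcos : 0 < cos θ := cos_pos_of_mem_Ioo ⟨by linarith [hθ.1, pi_pos], hθ.2⟩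
  rw [gaussRatio, mem_Ioo, lt_div_iff₀ hD, div_lt_one hD]
  constructor <;> nlinarith [mul_pos ha (pow_pos hcos 2), mul_pos hb (pow_pos hsin 2)]

lemma gaussRatio_zero (ha : 0 < a) : gaussRatio a b 0 = -1 := by
  simp [gaussRatio, ha.ne']

lemma gaussRatio_pi_div_two (hb : 0 < b) : gaussRatio a b (π / 2) = 1 := by
  simp [gaussRatio, hb.ne']

lemma one_sub_gaussRatio_sq (ha : 0 < a) (hb : 0 < b) (θ : ℝ) :
    1 - gaussRatio a b θ ^ 2
      = 4 * a * b * sin θ ^ 2 * cos θ ^ 2 / (a * cos θ ^ 2 + b * sin θ ^ 2) ^ 2 := by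
  have hD := (mul_cos_sq_add_mul_sin_sq_pos ha hb θ).ne'
  rw [gaussRatio, eq_div_iff (pow_ne_zero 2 hD)]
  field_simp
  ring

lemma hasDerivAt_gaussRatio (ha : 0 < a) (hb : 0 < b) (θ : ℝ) :
    HasDerivAt (gaussRatio a b)
      (4 * a * b * sin θ * cos θ / (a * cos θ ^ 2 + b * sin θ ^ 2) ^ 2) θ := by
  have hD := (mul_cos_sq_add_mul_sin_sq_pos ha hb θ).ne'
  have hN := (((hasDerivAt_sin θ).fun_pow 2).const_mul b).sub
    (((hasDerivAt_cos θ).fun_pow 2).const_mul a)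
  have hD' := (((hasDerivAt_cos θ).fun_pow 2).const_mul a).add
    (((hasDerivAt_sin θ).fun_pow 2).const_mul b)
  refine (hN.div hD' hD).congr_deriv ?_
  simp only [Pi.add_apply, Pi.sub_apply, Nat.cast_ofNat, Nat.reduceSub, pow_one]
  field_simp
  congr 1
  linear_combination (4 * a * b * sin θ * cos θ) * sin_sq_add_cos_sq θ

lemma hasDerivAt_arcsin_gaussRatio (ha : 0 < a) (hb : 0 < b) {θ : ℝ} (hθ : θ ∈ Ioo 0 (π / 2)) :
    HasDerivAt (fun x => arcsin (gaussRatio a b x))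
      (2 * √(a * b) / (a * cos θ ^ 2 + b * sin θ ^ 2)) θ := by
  have hD := mul_cos_sq_add_mul_sin_sq_pos ha hb θ
  have hsin : 0 < sin θ := sin_pos_of_pos_of_lt_pi hθ.1 (by linarith [hθ.2, pi_pos])
  have hcos : 0 < cos θ := cos_pos_of_mem_Ioo ⟨by linarith [hθ.1, pi_pos], hθ.2⟩
  obtain ⟨hlo, hhi⟩ := gaussRatio_mem_Ioo ha hb hθ
  have hsqrt : √(1 - gaussRatio a b θ ^ 2)
      = 2 * √(a * b) * sin θ * cos θ / (a * cos θ ^ 2 + b * sin θ ^ 2) := by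
    rw [one_sub_gaussRatio_sq ha hb, sqrt_eq_iff_mul_self_eq_of_pos (by positivity)]
    field_simp
    rw [sq_sqrt (by positivity)]
    ring
  refine ((hasDerivAt_arcsin hlo.ne' hhi.ne).comp θ (hasDerivAt_gaussRatio ha hb θ)).congr_deriv ?_
  rw [hsqrt]
  field_simp
  rw [sq_sqrt (by positivity)]
  ring

lemma continuous_gaussRatio (ha : 0 < a) (hb : 0 < b) : Continuous (gaussRatio a b) :=
  Continuous.div (by fun_prop) (by fun_prop) fun θ => (mul_cos_sq_add_mul_sin_sq_pos ha hb θ).ne'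

lemma mean_quadForm_arcsin_gaussRatio (ha : 0 < a) (hb : 0 < b) (θ : ℝ) :
    ((a + b) / 2) ^ 2 * cos (arcsin (gaussRatio a b θ)) ^ 2
        + √(a * b) ^ 2 * sin (arcsin (gaussRatio a b θ)) ^ 2
      = a * b * (a ^ 2 * cos θ ^ 2 + b ^ 2 * sin θ ^ 2) / (a * cos θ ^ 2 + b * sin θ ^ 2) ^ 2 := by
  obtain ⟨hlo, hhi⟩ := gaussRatio_mem_Icc ha hb θ
  have hcos : cos (arcsin (gaussRatio a b θ)) ^ 2 = 1 - gaussRatio a b θ ^ 2 := by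
    rw [cos_arcsin, sq_sqrt (by nlinarith)]
  have hD := (mul_cos_sq_add_mul_sin_sq_pos ha hb θ).ne'
  rw [hcos, sin_arcsin hlo hhi, one_sub_gaussRatio_sq ha hb, sq_sqrt (by positivity), gaussRatio]
  field_simp
  linear_combination 4 * (a ^ 2 * cos θ ^ 2 + b ^ 2 * sin θ ^ 2) * sin_sq_add_cos_sq θ

lemma agmIntegrand_mean_arcsin_gaussRatio_mul (ha : 0 < a) (hb : 0 < b) (θ : ℝ) :
    agmIntegrand ((a + b) / 2) √(a * b) (arcsin (gaussRatio a b θ))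
        * (2 * √(a * b) / (a * cos θ ^ 2 + b * sin θ ^ 2))
      = 2 * agmIntegrand a b θ := by
  have hD := mul_cos_sq_add_mul_sin_sq_pos ha hb θ
  rw [agmIntegrand, agmIntegrand, mean_quadForm_arcsin_gaussRatio ha hb,
    sqrt_div (by positivity), sqrt_mul (by positivity), sqrt_sq hD.le]
  field_simp

end gaussRatio

theorem agmIntegral_eq_agmIntegral_mean {a b : ℝ} (ha : 0 < a) (hb : 0 < b) :
    agmIntegral a b = agmIntegral ((a + b) / 2) √(a * b) := by
  set g := agmIntegrand ((a + b) / 2) √(a * b)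
  have hg : Continuous g := continuous_agmIntegrand (by positivity) (by positivity)
  have hπ : (0:ℝ) ≤ π / 2 := by positivity
  -- `arcsin` is not differentiable at the endpoint values `∓1`; the change of variables for
  -- monotone maps only needs the derivative on the open interval.
  have hsubst := integral_comp_mul_deriv_of_deriv_nonneg (g := g) (a := 0) (b := π / 2)
    (continuous_arcsin.comp (continuous_gaussRatio ha hb)).continuousOn
    (fun x hx => hasDerivAt_arcsin_gaussRatio ha hb
      (by rwa [min_eq_left hπ, max_eq_right hπ] at hx))
    (fun x _ => by positivity)
  simp only [Function.comp_apply] at hsubst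
  rw [gaussRatio_zero ha, gaussRatio_pi_div_two hb, arcsin_neg_one, arcsin_one,
    integral_neg_self_of_even hg agmIntegrand_neg] at hsubst
  simp only [g, agmIntegrand_mean_arcsin_gaussRatio_mul ha hb,
    intervalIntegral.integral_const_mul] at hsubst
  rw [agmIntegral, agmIntegral]
  linarith

lemma agmIntegral_mul {c : ℝ} (hc : 0 < c) (a b : ℝ) :
    agmIntegral (c * a) (c * b) = agmIntegral a b / c := by
  rw [agmIntegral, agmIntegral, ← intervalIntegral.integral_div]
  refine integral_congr fun t _ => ?_
  have h : (c * a) ^ 2 * cos t ^ 2 + (c * b) ^ 2 * sin t ^ 2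
      = c ^ 2 * (a ^ 2 * cos t ^ 2 + b ^ 2 * sin t ^ 2) := by ring
  rw [agmIntegrand, agmIntegrand, h, sqrt_mul (sq_nonneg c), sqrt_sq hc.le, div_div, mul_comm c]

lemma agmIntegral_one_eq_landen {k : ℝ} (hk : 0 < k) :
    agmIntegral 1 k = 2 / (1 + k) * agmIntegral 1 (2 * √k / (1 + k)) := by
  have hc : 0 < (1 + k) / 2 := by positivity
  calc agmIntegral 1 k = agmIntegral ((1 + k) / 2 * 1) ((1 + k) / 2 * (2 * √k / (1 + k))) := by
        rw [agmIntegral_eq_agmIntegral_mean one_pos hk, one_mul]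
        congr 1 <;> field_simp
    _ = 2 / (1 + k) * agmIntegral 1 (2 * √k / (1 + k)) := by
        rw [agmIntegral_mul hc]
        field_simp

lemma ellipticK_eq_agmIntegral {k : ℝ} (hk : k ^ 2 ≤ 1) :
    ellipticK k = agmIntegral 1 √(1 - k ^ 2) := by
  refine integral_congr fun t _ => ?_
  rw [agmIntegrand, sq_sqrt (sub_nonneg.2 hk)]
  congr 2
  linear_combination -sin_sq_add_cos_sq t

lemma ellipticK_sqrt_one_sub_sq {k : ℝ} (hk0 : 0 ≤ k) (hk1 : k ≤ 1) :
    ellipticK √(1 - k ^ 2) = agmIntegral 1 k := by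
  have hk2 : 0 ≤ 1 - k ^ 2 := by nlinarith
  rw [ellipticK_eq_agmIntegral (by rw [sq_sqrt hk2]; exact sub_le_self 1 (sq_nonneg k)),
    sq_sqrt hk2, sub_sub_cancel, sqrt_sq hk0]

lemma agmIntegral_pos {a b : ℝ} (ha : a ≠ 0) (hb : b ≠ 0) : 0 < agmIntegral a b :=
  intervalIntegral_pos_of_pos ((continuous_agmIntegrand ha hb).intervalIntegrable _ _)
    (agmIntegrand_pos ha hb) (by positivity)

lemma agmIntegral_strictAntiOn {a : ℝ} (ha : a ≠ 0) : StrictAntiOn (agmIntegral a) (Ioi 0) := by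
  intro b (hb : 0 < b) b' (hb' : 0 < b') hbb'
  have hQ : ∀ c t, 0 < c → 0 < a ^ 2 * cos t ^ 2 + c ^ 2 * sin t ^ 2 := fun c t hc =>
    mul_cos_sq_add_mul_sin_sq_pos (by positivity) (by positivity) t
  refine integral_lt_integral_of_continuousOn_of_le_of_exists_lt (by positivity)
    (continuous_agmIntegrand ha hb'.ne').continuousOn
    (continuous_agmIntegrand ha hb.ne').continuousOn (fun t _ => ?_) ⟨π / 2, ?_, ?_⟩
  · refine one_div_le_one_div_of_le (sqrt_pos.2 (hQ b t hb)) (sqrt_le_sqrt ?_)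
    gcongr
  · exact ⟨by positivity, le_rfl⟩
  · refine one_div_lt_one_div_of_lt (sqrt_pos.2 (hQ b _ hb)) (sqrt_lt_sqrt (hQ b _ hb).le ?_)
    simp only [cos_pi_div_two, sin_pi_div_two]
    gcongr

lemma ellipticK_ratio_eq {k : ℝ} (hk : k ∈ Icc (0:ℝ) 1) :
    ellipticK √(1 - k ^ 2) / ellipticK k = agmIntegral 1 k / agmIntegral 1 √(1 - k ^ 2) := by
  rw [ellipticK_sqrt_one_sub_sq hk.1 hk.2,
    ellipticK_eq_agmIntegral (by nlinarith [hk.1, hk.2])]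

lemma strictAntiOn_ellipticK_ratio :
    StrictAntiOn (fun k => ellipticK √(1 - k ^ 2) / ellipticK k) (Ioo 0 1) := by
  intro x hx y hy hxy
  have hx' : 0 < √(1 - x ^ 2) := sqrt_pos.2 (by nlinarith [hx.1, hx.2])
  have hy' : 0 < √(1 - y ^ 2) := sqrt_pos.2 (by nlinarith [hy.1, hy.2])
  have hxy' : √(1 - y ^ 2) < √(1 - x ^ 2) :=
    sqrt_lt_sqrt (by nlinarith [hy.1, hy.2]) (by nlinarith [hx.1])
  simp only [ellipticK_ratio_eq (Ioo_subset_Icc_self hx),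
    ellipticK_ratio_eq (Ioo_subset_Icc_self hy)]
  exact div_lt_div₀ (agmIntegral_strictAntiOn one_ne_zero hx.1 hy.1 hxy)
    (agmIntegral_strictAntiOn one_ne_zero hy' hx' hxy').le
    (agmIntegral_pos one_ne_zero hx.1.ne').le (agmIntegral_pos one_ne_zero hx'.ne')

lemma sqrt_two_sub_one_mem_Ioo : √2 - 1 ∈ Ioo (0:ℝ) 1 := by
  constructor <;> nlinarith [sq_sqrt (zero_le_two : (0:ℝ) ≤ 2), sqrt_nonneg 2]

lemma agmIntegral_one_sqrt_two_sub_one :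
    agmIntegral 1 (√2 - 1) = √2 * agmIntegral 1 √(1 - (√2 - 1) ^ 2) := by
  set k := √2 - 1
  have hs : √2 ^ 2 = 2 := sq_sqrt zero_le_two
  have hcompl : 1 - k ^ 2 = 2 * k := by linear_combination -hs
  have harg : 2 * √k / (1 + k) = √(1 - k ^ 2) := by
    rw [hcompl, sqrt_mul zero_le_two, show 1 + k = √2 by ring,
      div_eq_iff (sqrt_pos.2 two_pos).ne']
    linear_combination (-√k) * hs
  rw [agmIntegral_one_eq_landen sqrt_two_sub_one_mem_Ioo.1, harg, show 1 + k = √2 by ring,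
    div_sqrt]

theorem singular_modulus_two :
    (Real.sqrt 2 - 1 ∈ Set.Ioo (0:ℝ) 1) ∧
    ∀ k ∈ Set.Ioo (0:ℝ) 1,
      (ellipticK (Real.sqrt (1 - k^2)) / ellipticK k = Real.sqrt 2 ↔ k = Real.sqrt 2 - 1) := by
  have hk := sqrt_two_sub_one_mem_Ioo
  have hratio : ellipticK √(1 - (√2 - 1) ^ 2) / ellipticK (√2 - 1) = √2 := by
    rw [ellipticK_ratio_eq (Ioo_subset_Icc_self hk), agmIntegral_one_sqrt_two_sub_one,
      mul_div_cancel_right₀ _ (agmIntegral_pos one_ne_zero (sqrt_pos.2 ?_).ne').ne']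
    nlinarith [hk.1, hk.2]
  refine ⟨hk, fun k hk' => ?_⟩
  have hinj := strictAntiOn_ellipticK_ratio.injOn.eq_iff hk' hk
  beta_reduce at hinj
  rwa [hratio] at hinj
end
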